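/- Let P_ε(x,ξ) = Σ_{|σ|≤m} a_σ^ε(x)ξ^σ be a family of symbols on an open set U ⊆ ℝⁿ, Γ ⊆ ℝⁿ∖{0} an open cone, and suppose condition (mh_2) with parameters 0 ≤ δ < ρ ≤ 1 holds on K×Γ for every compact K ⊂ U, and that P_ε(x,ξ) ≠ 0 for (x,ξ) ∈ K×Γ with |ξ| above a slow-scale radius. Then for every compact K ⊂ U and every multi-index λ there exist slow-scale nets (T_ε), (t_ε) and ν > 0 such that |∂_x^λ (1/P_ε(x,ξ))| ≤ T_ε · (1/|P_ε(x,ξ)|) · (1+|ξ|)^{δ|λ|} for all (x,ξ) ∈ K×Γ with |ξ| ≥ t_ε and 0 < ε < ν. -/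

import Mathlib

open scoped BigOperators Classical
noncomputable section

abbrev Rn (n : ℕ) : Type := EuclideanSpace ℝ (Fin n)

/-- A net of positive reals (indexed by ε ∈ (0,1]) is of slow scale. -/
def SlowScale (r : ℝ → ℝ) : Prop :=
  (∀ ε ∈ Set.Ioc (0:ℝ) 1, 0 < r ε) ∧
  ∀ p : ℝ, 0 < p → ∃ C > (0:ℝ), ∃ ε₁ ∈ Set.Ioo (0:ℝ) 1,
    ∀ ε ∈ Set.Ioo (0:ℝ) ε₁, r ε ^ p ≤ C / ε

/-- Γ is a cone: stable under positive dilation. -/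
def IsCone {n : ℕ} (Γ : Set (Rn n)) : Prop :=
  ∀ ξ ∈ Γ, ∀ t : ℝ, 0 < t → t • ξ ∈ Γ

/-- first-order partial derivative in direction i -/
def pd1 {n : ℕ} (i : Fin n) (f : Rn n → ℂ) : Rn n → ℂ :=
  fun x => fderiv ℝ f x (EuclideanSpace.single i 1)

/-- multi-index partial derivative ∂^α -/
def pd {n : ℕ} (α : Fin n → ℕ) (f : Rn n → ℂ) : Rn n → ℂ :=
  (((List.finRange n).map fun i => (pd1 i)^[α i]).foldr (· ∘ ·) id) f

/-- |α| -/
def mdeg {n : ℕ} (α : Fin n → ℕ) : ℕ := ∑ i, α i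

/-- α! as a complex number -/
def mfactC {n : ℕ} (α : Fin n → ℕ) : ℂ := ((∏ i, Nat.factorial (α i) : ℕ) : ℂ)

/-- ξ^α -/
def mpow {n : ℕ} (ξ : Rn n) (α : Fin n → ℕ) : ℂ := ∏ i, ((ξ i : ℝ) : ℂ) ^ α i

/-- the finite set of multi-indices of length ≤ m -/
def midx (n m : ℕ) : Finset (Fin n → ℕ) :=
  (Finset.Icc (fun _ => 0) (fun _ => m)).filter fun σ => mdeg σ ≤ m

/-- ∂_x^α of a symbol P(x,ξ) -/
def pdx {n : ℕ} (α : Fin n → ℕ) (P : Rn n → Rn n → ℂ) : Rn n → Rn n → ℂ :=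
  fun x ξ => pd α (fun y => P y ξ) x

/-- ∂_ξ^β of a symbol P(x,ξ) -/
def pdxi {n : ℕ} (β : Fin n → ℕ) (P : Rn n → Rn n → ℂ) : Rn n → Rn n → ℂ :=
  fun x ξ => pd β (fun η => P x η) ξ

/-- ξ·x as a complex number -/
def edotC {n : ℕ} (ξ x : Rn n) : ℂ := ((∑ i, ξ i * x i : ℝ) : ℂ)

/-- the symbol P_ε(x,ξ) = Σ_{|σ|≤m} a_σ^ε(x) ξ^σ -/
def Psym {n : ℕ} (m : ℕ) (a : (Fin n → ℕ) → ℝ → Rn n → ℂ) (ε : ℝ) : Rn n → Rn n → ℂ :=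
  fun x ξ => ∑ σ ∈ midx n m, a σ ε x * mpow ξ σ

/-- the action P_ε(x,D)u = Σ_{|σ|≤m} a_σ^ε(x) D^σ u, D^σ = (-i)^{|σ|} ∂^σ -/
def PDOapply {n : ℕ} (m : ℕ) (a : (Fin n → ℕ) → ℝ → Rn n → ℂ) (ε : ℝ)
    (u : Rn n → ℂ) : Rn n → ℂ :=
  fun x => ∑ σ ∈ midx n m, a σ ε x * ((-Complex.I) ^ mdeg σ * pd σ u x)

/-- moderate net of smooth functions on Ω -/
def Moderate {n : ℕ} (Ω : Set (Rn n)) (u : ℝ → Rn n → ℂ) : Prop :=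
  (∀ ε ∈ Set.Ioc (0:ℝ) 1, ContDiffOn ℝ (⊤ : ℕ∞) (u ε) Ω) ∧
  ∀ K : Set (Rn n), IsCompact K → K ⊆ Ω → ∀ α : Fin n → ℕ,
    ∃ N : ℕ, ∃ C > (0:ℝ), ∃ ε₀ ∈ Set.Ioo (0:ℝ) 1,
      ∀ ε ∈ Set.Ioo (0:ℝ) ε₀, ∀ x ∈ K, ‖pd α (u ε) x‖ ≤ C / ε ^ N

/-- G^∞-regular net on Ω (ε-growth uniform in the derivative order) -/
def GInfReg {n : ℕ} (Ω : Set (Rn n)) (u : ℝ → Rn n → ℂ) : Prop :=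
  ∀ K : Set (Rn n), IsCompact K → K ⊆ Ω → ∃ N : ℕ, ∀ α : Fin n → ℕ,
    ∃ C > (0:ℝ), ∃ ε₀ ∈ Set.Ioo (0:ℝ) 1, ∀ ε ∈ Set.Ioo (0:ℝ) ε₀, ∀ x ∈ K,
      ‖pd α (u ε) x‖ ≤ C / ε ^ N

/-- rapidly decreasing of moderate type in the cone Γ -/
def RapDecMod {n : ℕ} (Γ : Set (Rn n)) (h : ℝ → Rn n → ℂ) : Prop :=
  ∃ M : ℕ, ∀ l : ℕ, ∃ C > (0:ℝ), ∃ ε₀ ∈ Set.Ioo (0:ℝ) 1, ∃ r : ℝ → ℝ, SlowScale r ∧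
    ∀ ε ∈ Set.Ioo (0:ℝ) ε₀, ∀ ξ ∈ Γ, r ε ≤ ‖ξ‖ →
      ‖h ε ξ‖ ≤ C / (ε ^ M * (1 + ‖ξ‖) ^ l)

/-- Fourier transform F(g)(ξ) = ∫ g(x) e^{-iξ·x} dx -/
def FT {n : ℕ} (g : Rn n → ℂ) (ξ : Rn n) : ℂ :=
  ∫ x : Rn n, g x * Complex.exp (-Complex.I * edotC ξ x)

/-- symbol of the transposed operator, via the expansion
    ᵗP(x,η) = Σ_{|σ|≤m} ((-1)^{|σ|}/σ!) (∂_ξ^σ ∂_x^σ P)(x,-η) -/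
def tsymb {n : ℕ} (m : ℕ) (P : Rn n → Rn n → ℂ) (x η : Rn n) : ℂ :=
  ∑ σ ∈ midx n m, ((-1 : ℂ) ^ mdeg σ / mfactC σ) * pdx σ (pdxi σ P) x (-η)

/-- coefficients r_β(x,ξ) of the operator R(ξ;x,D) from the algebraic lemma,
    for general symbols A and Q -/
def rGen {n : ℕ} (m : ℕ) (A Q : Rn n → Rn n → ℂ) (β : Fin n → ℕ) (x ξ : Rn n) : ℂ :=
  if β = (fun _ => 0) then
    (Q x (-ξ) - A x ξ) / A x ξ +
      ∑ γ ∈ (midx n m).filter (fun γ => 1 ≤ mdeg γ),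
        (mfactC γ)⁻¹ * pdxi γ (fun x' ξ' => Q x' (-ξ')) x ξ *
          ((-Complex.I) ^ mdeg γ * pdx γ (fun x' ξ' => (A x' ξ')⁻¹) x ξ)
  else
    ∑ γ ∈ midx n (m - mdeg β),
      (mfactC β * mfactC γ)⁻¹ *
        pdxi (fun i => β i + γ i) (fun x' ξ' => Q x' (-ξ')) x ξ *
          ((-Complex.I) ^ mdeg γ * pdx γ (fun x' ξ' => (A x' ξ')⁻¹) x ξ)

/-- the operator R(ξ;x,D)w = -Σ_{|β|≤m} r_β(x,ξ) D_x^β w -/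
def RopGen {n : ℕ} (m : ℕ) (A Q : Rn n → Rn n → ℂ) (ξ : Rn n) (w : Rn n → ℂ) : Rn n → ℂ :=
  fun x => -∑ β ∈ midx n m, rGen m A Q β x ξ * ((-Complex.I) ^ mdeg β * pd β w x)

/-- coefficients of R_ε with A = P_ε, Q = ᵗP_ε -/
def RcoefT {n : ℕ} (m : ℕ) (P : Rn n → Rn n → ℂ) : (Fin n → ℕ) → Rn n → Rn n → ℂ :=
  rGen m P (tsymb m P)

/-- the operator R_ε(ξ;x,D) with A = P_ε, Q = ᵗP_ε -/
def RopT {n : ℕ} (m : ℕ) (P : Rn n → Rn n → ℂ) (ξ : Rn n) : (Rn n → ℂ) → Rn n → ℂ :=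
  RopGen m P (tsymb m P) ξ

/-- condition (mh_1) with explicit exponent q -/
def MH1w {n : ℕ} (P : ℝ → Rn n → Rn n → ℂ) (K Γ : Set (Rn n)) (m₀ q : ℝ) : Prop :=
  ∃ r : ℝ → ℝ, SlowScale r ∧ ∃ ε₀ > (0:ℝ), ∀ ε ∈ Set.Ioo (0:ℝ) ε₀,
    ∀ x ∈ K, ∀ ξ ∈ Γ, r ε ≤ ‖ξ‖ → ε ^ q * (1 + ‖ξ‖) ^ m₀ ≤ ‖P ε x ξ‖

/-- condition (mh_1) -/
def MH1 {n : ℕ} (P : ℝ → Rn n → Rn n → ℂ) (K Γ : Set (Rn n)) (m₀ : ℝ) : Prop :=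
  ∃ q > (0:ℝ), MH1w P K Γ m₀ q

/-- condition (mh_2) -/
def MH2 {n : ℕ} (m : ℕ) (P : ℝ → Rn n → Rn n → ℂ) (K Γ : Set (Rn n)) (δ ρ : ℝ) : Prop :=
  ∀ α : Fin n → ℕ, ∃ s : ℝ → ℝ, SlowScale s ∧ ∃ r : ℝ → ℝ, SlowScale r ∧ ∃ ε₁ > (0:ℝ),
    ∀ β : Fin n → ℕ, mdeg β ≤ m → ∀ ε ∈ Set.Ioo (0:ℝ) ε₁, ∀ x ∈ K, ∀ ξ ∈ Γ, r ε ≤ ‖ξ‖ →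
      ‖pdx α (pdxi β (P ε)) x ξ‖ ≤
        s ε * ‖P ε x ξ‖ * (1 + ‖ξ‖) ^ (δ * (mdeg α : ℝ) - ρ * (mdeg β : ℝ))

/-- b_m^ε(x) = Σ_{|α|=m} |a_α^ε(x)| -/
def bprin {n : ℕ} (m : ℕ) (a : (Fin n → ℕ) → ℝ → Rn n → ℂ) (ε : ℝ) (x : Rn n) : ℝ :=
  ∑ σ ∈ (midx n m).filter (fun σ => mdeg σ = m), ‖a σ ε x‖

/-- principal symbol P_{ε,m}(x,ξ) = Σ_{|α|=m} a_α^ε(x) ξ^α -/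
def Pprin {n : ℕ} (m : ℕ) (a : (Fin n → ℕ) → ℝ → Rn n → ℂ) (ε : ℝ) (x ξ : Rn n) : ℂ :=
  ∑ σ ∈ (midx n m).filter (fun σ => mdeg σ = m), a σ ε x * mpow ξ σ

/-- condition (st_1) on K × Γ -/
def ST1 {n : ℕ} (m : ℕ) (a : (Fin n → ℕ) → ℝ → Rn n → ℂ) (K Γ : Set (Rn n)) : Prop :=
  ∃ s : ℝ → ℝ, SlowScale s ∧ ∃ r : ℝ → ℝ, SlowScale r ∧ ∃ ε₀ > (0:ℝ),
    ∀ ε ∈ Set.Ioo (0:ℝ) ε₀, ∀ x ∈ K, ∀ ξ ∈ Γ, r ε ≤ ‖ξ‖ →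
      (s ε)⁻¹ * bprin m a ε x * (1 + ‖ξ‖) ^ m ≤ ‖Pprin m a ε x ξ‖

/-- condition (st_2) on K -/
def ST2 {n : ℕ} (m : ℕ) (a : (Fin n → ℕ) → ℝ → Rn n → ℂ) (K : Set (Rn n)) : Prop :=
  ∀ γ : Fin n → ℕ, ∃ s : ℝ → ℝ, SlowScale s ∧ ∃ r : ℝ → ℝ, SlowScale r ∧ ∃ ε₁ > (0:ℝ),
    ∀ β ∈ midx n m, ∀ ε ∈ Set.Ioo (0:ℝ) ε₁, ∀ x ∈ K,
      ‖pd γ (a β ε) x‖ ≤ s ε * bprin m a ε x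

/-- slow-scale growth in each derivative on compact sets -/
def SlowScaleReg {n : ℕ} (Ω : Set (Rn n)) (u : ℝ → Rn n → ℂ) : Prop :=
  (∀ ε ∈ Set.Ioc (0:ℝ) 1, ContDiffOn ℝ (⊤ : ℕ∞) (u ε) Ω) ∧
  ∀ K : Set (Rn n), IsCompact K → K ⊆ Ω → ∀ α : Fin n → ℕ,
    ∃ s : ℝ → ℝ, SlowScale s ∧ ∃ ε₀ > (0:ℝ), ∀ ε ∈ Set.Ioo (0:ℝ) ε₀, ∀ x ∈ K,
      ‖pd α (u ε) x‖ ≤ s ε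

/-- first-order symbol Σ_j a_j^ε(x) ξ_j + a_0^ε(x) -/
def P1sym {n : ℕ} (aj : Fin n → ℝ → Rn n → ℂ) (a0 : ℝ → Rn n → ℂ) (ε : ℝ) :
    Rn n → Rn n → ℂ :=
  fun x ξ => (∑ j, aj j ε x * ((ξ j : ℝ) : ℂ)) + a0 ε x

/-- first-order operator action Σ_j a_j^ε(x) D_j u + a_0^ε(x) u -/
def P1apply {n : ℕ} (aj : Fin n → ℝ → Rn n → ℂ) (a0 : ℝ → Rn n → ℂ) (ε : ℝ)
    (u : Rn n → ℂ) : Rn n → ℂ :=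
  fun x => (∑ j, aj j ε x * (-Complex.I * pd1 j u x)) + a0 ε x * u x


namespace Stmt14Aux

variable {n : ℕ}

/-- auxiliary: pd over a list of indices -/
def pdA (l : List (Fin n)) (α : Fin n → ℕ) (f : Rn n → ℂ) : Rn n → ℂ :=
  (l.map fun i => (pd1 i)^[α i]).foldr (· ∘ ·) id f

lemma pd_eq_pdA (α : Fin n → ℕ) (f : Rn n → ℂ) : pd α f = pdA (List.finRange n) α f := rfl

lemma pdA_nil (α : Fin n → ℕ) (f : Rn n → ℂ) : pdA [] α f = f := rfl

lemma pdA_cons (i : Fin n) (l : List (Fin n)) (α : Fin n → ℕ) (f : Rn n → ℂ) :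
    pdA (i :: l) α f = (pd1 i)^[α i] (pdA l α f) := rfl

lemma pd_zero (f : Rn n → ℂ) : pd (fun _ => 0) f = f := by
  rw [pd_eq_pdA]
  induction (List.finRange n) with
  | nil => rfl
  | cons i t ih => rw [pdA_cons]; simpa using ih

/-- smoothness of pd1 -/
lemma pd1_smoothOn {V : Set (Rn n)} {f : Rn n → ℂ} (hV : IsOpen V)
    (hf : ContDiffOn ℝ (⊤ : ℕ∞) f V) (i : Fin n) :
    ContDiffOn ℝ (⊤ : ℕ∞) (pd1 i f) V := by
  have h1 : ContDiffOn ℝ (⊤ : ℕ∞) (fderivWithin ℝ f V) V :=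
    hf.fderivWithin hV.uniqueDiffOn (by exact_mod_cast le_refl _)
  have h2 : ContDiffOn ℝ (⊤ : ℕ∞)
      (fun x => (fderivWithin ℝ f V x) (EuclideanSpace.single i 1)) V :=
    h1.clm_apply contDiffOn_const
  refine h2.congr fun x hx => ?_
  simp [pd1, fderivWithin_of_isOpen hV hx]

lemma diffAt_of_smoothOn {V : Set (Rn n)} {f : Rn n → ℂ} (hV : IsOpen V)
    (hf : ContDiffOn ℝ (⊤ : ℕ∞) f V) {x : Rn n} (hx : x ∈ V) :
    DifferentiableAt ℝ f x :=
  (hf.contDiffAt (hV.mem_nhds hx)).differentiableAt (by simp)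

lemma pd1_congrOn {V : Set (Rn n)} {f g : Rn n → ℂ} (hV : IsOpen V)
    (h : ∀ y ∈ V, f y = g y) (i : Fin n) {x : Rn n} (hx : x ∈ V) :
    pd1 i f x = pd1 i g x := by
  have : f =ᶠ[nhds x] g := Filter.eventuallyEq_of_mem (hV.mem_nhds hx) h
  simp only [pd1, this.fderiv_eq]

lemma pd1_iter_congrOn {V : Set (Rn n)} {f g : Rn n → ℂ} (hV : IsOpen V)
    (h : ∀ y ∈ V, f y = g y) (i : Fin n) (k : ℕ) :
    ∀ x ∈ V, (pd1 i)^[k] f x = (pd1 i)^[k] g x := by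
  induction k with
  | zero => simpa using h
  | succ k ih =>
      intro x hx
      rw [Function.iterate_succ_apply', Function.iterate_succ_apply']
      exact pd1_congrOn hV ih i hx

lemma pd1_iter_smoothOn {V : Set (Rn n)} {f : Rn n → ℂ} (hV : IsOpen V)
    (hf : ContDiffOn ℝ (⊤ : ℕ∞) f V) (i : Fin n) (k : ℕ) :
    ContDiffOn ℝ (⊤ : ℕ∞) ((pd1 i)^[k] f) V := by
  induction k with
  | zero => simpa using hf
  | succ k ih => rw [Function.iterate_succ_apply']; exact pd1_smoothOn hV ih i

lemma pdA_smoothOn {V : Set (Rn n)} {f : Rn n → ℂ} (hV : IsOpen V)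
    (hf : ContDiffOn ℝ (⊤ : ℕ∞) f V) (l : List (Fin n)) (α : Fin n → ℕ) :
    ContDiffOn ℝ (⊤ : ℕ∞) (pdA l α f) V := by
  induction l with
  | nil => simpa [pdA_nil] using hf
  | cons i t ih => rw [pdA_cons]; exact pd1_iter_smoothOn hV ih i _

lemma pd_smoothOn {V : Set (Rn n)} {f : Rn n → ℂ} (hV : IsOpen V)
    (hf : ContDiffOn ℝ (⊤ : ℕ∞) f V) (α : Fin n → ℕ) :
    ContDiffOn ℝ (⊤ : ℕ∞) (pd α f) V := by
  rw [pd_eq_pdA]; exact pdA_smoothOn hV hf _ _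

/-- Schwarz symmetry -/
lemma pd1_comm {V : Set (Rn n)} {f : Rn n → ℂ} (hV : IsOpen V)
    (hf : ContDiffOn ℝ (⊤ : ℕ∞) f V) (i j : Fin n) {x : Rn n} (hx : x ∈ V) :
    pd1 i (pd1 j f) x = pd1 j (pd1 i f) x := by
  have hAt : ContDiffAt ℝ (⊤ : ℕ∞) f x := hf.contDiffAt (hV.mem_nhds hx)
  have hsym : IsSymmSndFDerivAt ℝ f x :=
    hAt.isSymmSndFDerivAt (by simp; exact WithTop.coe_le_coe.mpr (le_top : (2:ℕ∞) ≤ ⊤))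
  have hd : DifferentiableAt ℝ (fderiv ℝ f) x := by
    refine (hAt.fderiv_right (m := (⊤ : ℕ∞)) ?_).differentiableAt ?_
    · exact_mod_cast le_top
    · simp
  have key : ∀ v w : Rn n,
      fderiv ℝ (fun y => fderiv ℝ f y w) x v = fderiv ℝ (fderiv ℝ f) x v w := by
    intro v w
    rw [fderiv_clm_apply hd (differentiableAt_const w)]
    simp
  rw [show pd1 j f = fun y => fderiv ℝ f y (EuclideanSpace.single j 1) from rfl,
    show pd1 i f = fun y => fderiv ℝ f y (EuclideanSpace.single i 1) from rfl]
  simp only [pd1]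
  rw [key, key, hsym.eq]


lemma pd1_iter_comm {V : Set (Rn n)} {f : Rn n → ℂ} (hV : IsOpen V)
    (hf : ContDiffOn ℝ (⊤ : ℕ∞) f V) (i j : Fin n) (k : ℕ) :
    ∀ x ∈ V, pd1 i ((pd1 j)^[k] f) x = (pd1 j)^[k] (pd1 i f) x := by
  induction k with
  | zero => intro x _; rfl
  | succ k ih =>
      intro x hx
      rw [Function.iterate_succ_apply', Function.iterate_succ_apply']
      rw [pd1_comm hV (pd1_iter_smoothOn hV hf j k) i j hx]
      exact pd1_congrOn hV ih j hx

lemma pd1_pdA_comm {V : Set (Rn n)} {f : Rn n → ℂ} (hV : IsOpen V)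
    (hf : ContDiffOn ℝ (⊤ : ℕ∞) f V) (i : Fin n) (l : List (Fin n)) (α : Fin n → ℕ) :
    ∀ x ∈ V, pd1 i (pdA l α f) x = pdA l α (pd1 i f) x := by
  induction l with
  | nil => intro x _; rfl
  | cons j t ih =>
      intro x hx
      rw [pdA_cons, pdA_cons]
      rw [pd1_iter_comm hV (pdA_smoothOn hV hf t α) i j (α j) x hx]
      exact pd1_iter_congrOn hV ih j (α j) x hx

/-- the unit multi-index e_i -/
def uv (i : Fin n) : Fin n → ℕ := fun j => if j = i then 1 else 0

lemma mdeg_add_uv (μ : Fin n → ℕ) (i : Fin n) :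
    mdeg (fun j => μ j + uv i j) = mdeg μ + 1 := by
  simp only [mdeg, uv, Finset.sum_add_distrib]
  congr 1
  simp

lemma mdeg_uv (i : Fin n) : mdeg (uv i) = 1 := by
  simp [mdeg, uv]

lemma pdA_congr_idx {α β : Fin n → ℕ} (f : Rn n → ℂ) (l : List (Fin n))
    (h : ∀ j ∈ l, α j = β j) : pdA l α f = pdA l β f := by
  induction l with
  | nil => rfl
  | cons j t ih =>
      rw [pdA_cons, pdA_cons, h j (List.mem_cons_self),
        ih fun j hj => h j (List.mem_cons_of_mem _ hj)]

lemma pdA_add_uv {V : Set (Rn n)} {f : Rn n → ℂ} (hV : IsOpen V)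
    (hf : ContDiffOn ℝ (⊤ : ℕ∞) f V) (i : Fin n) (α : Fin n → ℕ) :
    ∀ (l : List (Fin n)), i ∈ l → l.Nodup →
      ∀ x ∈ V, pdA l (fun j => α j + uv i j) f x = pdA l α (pd1 i f) x := by
  intro l
  induction l with
  | nil => intro h; simp at h
  | cons j t ih =>
      intro hmem hnd x hx
      rcases List.nodup_cons.mp hnd with ⟨hjt, hndt⟩
      by_cases hji : j = i
      · obtain rfl := hji
        have hit : j ∉ t := hjt
        rw [pdA_cons, pdA_cons]
        have h1 : pdA t (fun j' => α j' + uv j j') f = pdA t α f :=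
          pdA_congr_idx f t fun j' hj' => by
            have hne : j' ≠ j := fun h => hit (h ▸ hj')
            simp [uv, hne]
        rw [h1]
        rw [show α j + uv j j = α j + 1 from by simp [uv], Function.iterate_succ_apply]
        refine pd1_iter_congrOn hV (fun y hy => ?_) j (α j) x hx
        exact pd1_pdA_comm hV hf j t α y hy
      · have hit : i ∈ t := by
          rcases List.mem_cons.mp hmem with h | h
          · exact absurd h.symm hji
          · exact h
        rw [pdA_cons, pdA_cons]
        rw [show α j + uv i j = α j from by simp [uv, hji]]
        exact pd1_iter_congrOn hV (fun y hy => ih hit hndt y hy) j (α j) x hx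

lemma pd_add_uv {V : Set (Rn n)} {f : Rn n → ℂ} (hV : IsOpen V)
    (hf : ContDiffOn ℝ (⊤ : ℕ∞) f V) (i : Fin n) (α : Fin n → ℕ) {x : Rn n} (hx : x ∈ V) :
    pd (fun j => α j + uv i j) f x = pd1 i (pd α f) x := by
  rw [pd_eq_pdA, pd_eq_pdA,
    pdA_add_uv hV hf i α (List.finRange n) (List.mem_finRange i) (List.nodup_finRange n) x hx]
  exact (pd1_pdA_comm hV hf i (List.finRange n) α x hx).symm

lemma pd_uv {V : Set (Rn n)} {f : Rn n → ℂ} (hV : IsOpen V)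
    (hf : ContDiffOn ℝ (⊤ : ℕ∞) f V) (i : Fin n) {x : Rn n} (hx : x ∈ V) :
    pd (uv i) f x = pd1 i f x := by
  have h := pd_add_uv hV hf i (fun _ => 0) hx
  rw [pd_zero] at h
  simpa using h


/-! pointwise derivative rules -/

lemma pd1_add {f g : Rn n → ℂ} {x : Rn n} (hf : DifferentiableAt ℝ f x)
    (hg : DifferentiableAt ℝ g x) (i : Fin n) :
    pd1 i (fun y => f y + g y) x = pd1 i f x + pd1 i g x := by
  simp only [pd1]
  rw [fderiv_fun_add hf hg]
  simp

lemma pd1_mul {f g : Rn n → ℂ} {x : Rn n} (hf : DifferentiableAt ℝ f x)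
    (hg : DifferentiableAt ℝ g x) (i : Fin n) :
    pd1 i (fun y => f y * g y) x = pd1 i f x * g x + f x * pd1 i g x := by
  simp only [pd1]
  rw [fderiv_fun_mul hf hg]
  simp [smul_eq_mul]
  ring

lemma pd1_const_mul {f : Rn n → ℂ} {x : Rn n} (hf : DifferentiableAt ℝ f x)
    (c : ℂ) (i : Fin n) :
    pd1 i (fun y => c * f y) x = c * pd1 i f x := by
  simp only [pd1]
  rw [fderiv_const_mul hf c]
  simp

lemma pd1_const (c : ℂ) (x : Rn n) (i : Fin n) : pd1 i (fun _ => c) x = 0 := by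
  simp [pd1]

lemma pd1_inv {f : Rn n → ℂ} {x : Rn n} (hf : DifferentiableAt ℝ f x)
    (h0 : f x ≠ 0) (i : Fin n) :
    pd1 i (fun y => (f y)⁻¹) x = -(pd1 i f x * ((f x)⁻¹ * (f x)⁻¹)) := by
  have h1 : HasFDerivAt (fun y : ℂ => y⁻¹)
      (-ContinuousLinearMap.mulLeftRight ℝ ℂ (f x)⁻¹ (f x)⁻¹) (f x) :=
    hasFDerivAt_inv' h0
  have h2 : HasFDerivAt (fun y => (f y)⁻¹)
      ((-ContinuousLinearMap.mulLeftRight ℝ ℂ (f x)⁻¹ (f x)⁻¹).comp (fderiv ℝ f x)) x :=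
    h1.comp x hf.hasFDerivAt
  simp only [pd1]
  rw [h2.fderiv]
  simp [ContinuousLinearMap.mulLeftRight_apply]
  ring

/-! terms and their values -/

/-- value of a term `(c, [μ₁,…,μ_k])`:  `c ∏ (∂^{μ_j} f / f) · f⁻¹` -/
def tval (f : Rn n → ℂ) (p : ℂ × List (Fin n → ℕ)) (x : Rn n) : ℂ :=
  p.1 * ((p.2.map fun μ => pd μ f x * (f x)⁻¹).prod) * (f x)⁻¹

section Terms

variable {V : Set (Rn n)} {f : Rn n → ℂ}

lemma prodfun_diffAt (hV : IsOpen V) (hf : ContDiffOn ℝ (⊤ : ℕ∞) f V)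
    (hf0 : ∀ y ∈ V, f y ≠ 0) {x : Rn n} (hx : x ∈ V) (ms : List (Fin n → ℕ)) :
    DifferentiableAt ℝ (fun y => ((ms.map fun μ => pd μ f y * (f y)⁻¹).prod)) x := by
  induction ms with
  | nil => simpa using differentiableAt_const (1 : ℂ)
  | cons μ t ih =>
      simp only [List.map_cons, List.prod_cons]
      exact (((diffAt_of_smoothOn hV (pd_smoothOn hV hf μ) hx)).mul
        ((diffAt_of_smoothOn hV hf hx).inv (hf0 x hx))).mul ih

lemma tval_diffAt (hV : IsOpen V) (hf : ContDiffOn ℝ (⊤ : ℕ∞) f V)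
    (hf0 : ∀ y ∈ V, f y ≠ 0) {x : Rn n} (hx : x ∈ V) (p : ℂ × List (Fin n → ℕ)) :
    DifferentiableAt ℝ (tval f p) x := by
  unfold tval
  exact ((differentiableAt_const p.1).mul (prodfun_diffAt hV hf hf0 hx p.2)).mul
    ((diffAt_of_smoothOn hV hf hx).inv (hf0 x hx))

lemma sumfun_diffAt (hV : IsOpen V) (hf : ContDiffOn ℝ (⊤ : ℕ∞) f V)
    (hf0 : ∀ y ∈ V, f y ≠ 0) {x : Rn n} (hx : x ∈ V) (L : List (ℂ × List (Fin n → ℕ))) :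
    DifferentiableAt ℝ (fun y => (L.map (fun p => tval f p y)).sum) x := by
  induction L with
  | nil => simpa using differentiableAt_const (0 : ℂ)
  | cons p t ih =>
      simp only [List.map_cons, List.sum_cons]
      exact (tval_diffAt hV hf hf0 hx p).add ih

lemma list_mul_sum {β : Type*} (a : ℂ) (L : List β) (g : β → ℂ) :
    a * (L.map g).sum = (L.map fun b => a * g b).sum := by
  induction L with
  | nil => simp
  | cons b t ih => simp [mul_add, ih]


/-- one derivative of a single term -/
lemma Dstep1 (i : Fin n) (c : ℂ) (ms : List (Fin n → ℕ)) :
    ∃ L' : List (ℂ × List (Fin n → ℕ)),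
      (∀ q ∈ L', (q.2.map mdeg).sum = (ms.map mdeg).sum + 1) ∧
      ∀ (V : Set (Rn n)) (f : Rn n → ℂ) (hV : IsOpen V)
        (hf : ContDiffOn ℝ (⊤ : ℕ∞) f V) (hf0 : ∀ y ∈ V, f y ≠ 0),
        ∀ x ∈ V, pd1 i (tval f (c, ms)) x = (L'.map (fun q => tval f q x)).sum := by
  induction ms generalizing c with
  | nil =>
      refine ⟨[(-c, [uv i])], ?_, ?_⟩
      · intro q hq
        simp only [List.mem_singleton] at hq
        subst hq
        simp [mdeg_uv]
      · intro V f hV hf hf0 x hx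
        have he : tval f (c, []) = fun y => c * (f y)⁻¹ := by
          funext y; simp [tval]
        rw [he, pd1_const_mul (show DifferentiableAt ℝ (fun y => (f y)⁻¹) x from
            (diffAt_of_smoothOn hV hf hx).inv (hf0 x hx)) c i,
          pd1_inv (diffAt_of_smoothOn hV hf hx) (hf0 x hx) i]
        simp only [List.map_cons, List.map_nil, List.sum_cons, List.sum_nil, tval,
          List.prod_cons, List.prod_nil]
        rw [pd_uv hV hf i hx]
        ring
  | cons μ t ih =>
      obtain ⟨L'', hL''deg, hL''⟩ := ih c
      refine ⟨(c, (fun j => μ j + uv i j) :: t) :: (-c, μ :: uv i :: t) ::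
        (L''.map fun q => (q.1, μ :: q.2)), ?_, ?_⟩
      · intro q hq
        simp only [List.mem_cons, List.mem_map] at hq
        rcases hq with rfl | rfl | ⟨q', hq', rfl⟩
        · simp [mdeg_add_uv]; ring
        · simp [mdeg_uv]; ring
        · simp only [List.map_cons, List.sum_cons]
          have := hL''deg q' hq'
          omega
      · intro V f hV hf hf0 x hx
        have hfd := diffAt_of_smoothOn hV hf hx
        have hfi : DifferentiableAt ℝ (fun y => (f y)⁻¹) x := hfd.inv (hf0 x hx)
        have hμd := diffAt_of_smoothOn hV (pd_smoothOn hV hf μ) hx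
        have he : tval f (c, μ :: t) =
            fun y => (pd μ f y * (f y)⁻¹) * tval f (c, t) y := by
          funext y; simp only [tval, List.map_cons, List.prod_cons]; ring
        have hpdμ : pd1 i (pd μ f) x = pd (fun j => μ j + uv i j) f x :=
          (pd_add_uv hV hf i μ hx).symm
        have hpd1 : pd1 i f x = pd (uv i) f x := (pd_uv hV hf i hx).symm
        have hg1 : pd1 i (fun y => pd μ f y * (f y)⁻¹) x =
            pd1 i (pd μ f) x * (f x)⁻¹ + pd μ f x * pd1 i (fun y => (f y)⁻¹) x :=
          pd1_mul hμd hfi i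
        rw [he, pd1_mul (show DifferentiableAt ℝ (fun y => pd μ f y * (f y)⁻¹) x from
            hμd.mul hfi) (tval_diffAt hV hf hf0 hx (c, t)) i,
          hg1, pd1_inv hfd (hf0 x hx) i, hL'' V f hV hf hf0 x hx, hpdμ, hpd1]
        simp only [List.map_cons, List.sum_cons, List.map_map]
        have hmap : L''.map ((fun q => tval f q x) ∘ (fun q => (q.1, μ :: q.2)))
            = L''.map fun q => (pd μ f x * (f x)⁻¹) * tval f q x := by
          refine List.map_congr_left fun q _ => ?_
          simp only [Function.comp_apply, tval, List.map_cons, List.prod_cons]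
          ring
        rw [hmap, ← list_mul_sum]
        simp only [tval, List.map_cons, List.prod_cons]
        ring


/-- one derivative of a sum of terms -/
lemma DstepL (i : Fin n) (L : List (ℂ × List (Fin n → ℕ))) (d : ℕ)
    (hd : ∀ p ∈ L, (p.2.map mdeg).sum = d) :
    ∃ L' : List (ℂ × List (Fin n → ℕ)),
      (∀ q ∈ L', (q.2.map mdeg).sum = d + 1) ∧
      ∀ (V : Set (Rn n)) (f : Rn n → ℂ) (hV : IsOpen V)
        (hf : ContDiffOn ℝ (⊤ : ℕ∞) f V) (hf0 : ∀ y ∈ V, f y ≠ 0),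
        ∀ x ∈ V, pd1 i (fun y => (L.map (fun p => tval f p y)).sum) x
          = (L'.map (fun q => tval f q x)).sum := by
  induction L with
  | nil =>
      refine ⟨[], by simp, ?_⟩
      intro V f hV hf hf0 x hx
      simp [pd1_const (0 : ℂ) x i]
  | cons p t ih =>
      obtain ⟨Lt, hLtdeg, hLt⟩ := ih fun p hp => hd p (List.mem_cons_of_mem _ hp)
      obtain ⟨Lp, hLpdeg, hLp⟩ := Dstep1 i p.1 p.2
      refine ⟨Lp ++ Lt, ?_, ?_⟩
      · intro q hq
        rcases List.mem_append.mp hq with h | h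
        · rw [hLpdeg q h, hd p (List.mem_cons_self)]
        · exact hLtdeg q h
      · intro V f hV hf hf0 x hx
        have he : (fun y => ((p :: t).map (fun p => tval f p y)).sum)
            = fun y => tval f p y + (t.map (fun p => tval f p y)).sum := by
          funext y; simp
        rw [he, pd1_add (tval_diffAt hV hf hf0 hx p) (sumfun_diffAt hV hf hf0 hx t) i,
          hLt V f hV hf hf0 x hx]
        have : pd1 i (tval f p) x = (Lp.map (fun q => tval f q x)).sum := by
          have := hLp V f hV hf hf0 x hx
          simpa using this
        rw [this]
        simp

/-- iterated derivative in one direction of a sum of terms -/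
lemma DstepIter (i : Fin n) (k : ℕ) (L : List (ℂ × List (Fin n → ℕ))) (d : ℕ)
    (hd : ∀ p ∈ L, (p.2.map mdeg).sum = d) :
    ∃ L' : List (ℂ × List (Fin n → ℕ)),
      (∀ q ∈ L', (q.2.map mdeg).sum = d + k) ∧
      ∀ (V : Set (Rn n)) (f : Rn n → ℂ) (h : Rn n → ℂ) (hV : IsOpen V)
        (hf : ContDiffOn ℝ (⊤ : ℕ∞) f V) (hf0 : ∀ y ∈ V, f y ≠ 0)
        (hh : ∀ y ∈ V, h y = (L.map (fun p => tval f p y)).sum),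
        ∀ x ∈ V, (pd1 i)^[k] h x = (L'.map (fun q => tval f q x)).sum := by
  induction k with
  | zero =>
      exact ⟨L, by simpa using hd, fun V f h hV hf hf0 hh x hx => by
        simpa using hh x hx⟩
  | succ k ihk =>
      obtain ⟨Lk, hLkdeg, hLk⟩ := ihk
      obtain ⟨L', hL'deg, hL'⟩ := DstepL i Lk (d + k) hLkdeg
      refine ⟨L', fun q hq => by rw [hL'deg q hq]; ring, ?_⟩
      intro V f h hV hf hf0 hh x hx
      rw [Function.iterate_succ_apply']
      rw [pd1_congrOn hV (fun y hy => hLk V f h hV hf hf0 hh y hy) i hx]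
      exact hL' V f hV hf hf0 x hx

/-- structure of `∂^l (1/f)` over a list of directions -/
lemma pdA_inv_identity (l : List (Fin n)) (lam : Fin n → ℕ) :
    ∃ L : List (ℂ × List (Fin n → ℕ)),
      (∀ p ∈ L, (p.2.map mdeg).sum = (l.map lam).sum) ∧
      ∀ (V : Set (Rn n)) (f : Rn n → ℂ) (hV : IsOpen V)
        (hf : ContDiffOn ℝ (⊤ : ℕ∞) f V) (hf0 : ∀ y ∈ V, f y ≠ 0),
        ∀ x ∈ V, pdA l lam (fun y => (f y)⁻¹) x = (L.map (fun q => tval f q x)).sum := by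
  induction l with
  | nil =>
      refine ⟨[((1 : ℂ), [])], by simp, ?_⟩
      intro V f hV hf hf0 x hx
      simp [pdA_nil, tval]
  | cons i t ih =>
      obtain ⟨Lt, hLtdeg, hLt⟩ := ih
      obtain ⟨L', hL'deg, hL'⟩ := DstepIter i (lam i) Lt ((t.map lam).sum) hLtdeg
      refine ⟨L', ?_, ?_⟩
      · intro q hq
        rw [hL'deg q hq]
        simp [List.map_cons, List.sum_cons]
        ring
      · intro V f hV hf hf0 x hx
        rw [pdA_cons]
        exact hL' V f (pdA t lam (fun y => (f y)⁻¹)) hV hf hf0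
          (fun y hy => hLt V f hV hf hf0 y hy) x hx

/-- structure of `∂^λ (1/f)` -/
lemma pd_inv_identity (lam : Fin n → ℕ) :
    ∃ L : List (ℂ × List (Fin n → ℕ)),
      (∀ p ∈ L, (p.2.map mdeg).sum = mdeg lam) ∧
      ∀ (V : Set (Rn n)) (f : Rn n → ℂ) (hV : IsOpen V)
        (hf : ContDiffOn ℝ (⊤ : ℕ∞) f V) (hf0 : ∀ y ∈ V, f y ≠ 0),
        ∀ x ∈ V, pd lam (fun y => (f y)⁻¹) x = (L.map (fun q => tval f q x)).sum := by
  obtain ⟨L, hdeg, hid⟩ := pdA_inv_identity (List.finRange n) lam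
  refine ⟨L, ?_, ?_⟩
  · intro p hp
    rw [hdeg p hp, ← Fin.sum_univ_def]
    rfl
  · intro V f hV hf hf0 x hx
    rw [pd_eq_pdA]
    exact hid V f hV hf hf0 x hx

end Terms


/-! slow scale net lemmas -/

lemma ss_const {C : ℝ} (hC : 0 < C) : SlowScale (fun _ => C) := by
  refine ⟨fun _ _ => hC, fun p hp => ⟨C ^ p, Real.rpow_pos_of_pos hC p,
    1/2, by norm_num, fun ε hε => ?_⟩⟩
  rw [le_div_iff₀ hε.1]
  exact mul_le_of_le_one_right (Real.rpow_pos_of_pos hC p).le (by linarith [hε.2])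

lemma ss_mul {r s : ℝ → ℝ} (hr : SlowScale r) (hs : SlowScale s) :
    SlowScale (fun ε => r ε * s ε) := by
  refine ⟨fun ε hε => mul_pos (hr.1 ε hε) (hs.1 ε hε), fun p hp => ?_⟩
  obtain ⟨C₁, hC₁, ε₁, hε₁, h₁⟩ := hr.2 (2*p) (by linarith)
  obtain ⟨C₂, hC₂, ε₂, hε₂, h₂⟩ := hs.2 (2*p) (by linarith)
  refine ⟨(C₁ + C₂)/2, by linarith, min ε₁ ε₂,
    ⟨lt_min hε₁.1 hε₂.1, lt_of_le_of_lt (min_le_left _ _) hε₁.2⟩, fun ε hε => ?_⟩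
  have hεIoc : ε ∈ Set.Ioc (0:ℝ) 1 := ⟨hε.1, le_of_lt (lt_of_lt_of_le hε.2
    ((min_le_left _ _).trans hε₁.2.le))⟩
  have hrp := hr.1 ε hεIoc
  have hsp := hs.1 ε hεIoc
  have e1 : r ε ^ p * r ε ^ p = r ε ^ (2*p) := by
    rw [← Real.rpow_add hrp]; ring_nf
  have e2 : s ε ^ p * s ε ^ p = s ε ^ (2*p) := by
    rw [← Real.rpow_add hsp]; ring_nf
  have b1 : r ε ^ (2*p) ≤ C₁ / ε :=
    h₁ ε ⟨hε.1, lt_of_lt_of_le hε.2 (min_le_left _ _)⟩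
  have b2 : s ε ^ (2*p) ≤ C₂ / ε :=
    h₂ ε ⟨hε.1, lt_of_lt_of_le hε.2 (min_le_right _ _)⟩
  have key : (r ε * s ε) ^ p = r ε ^ p * s ε ^ p := Real.mul_rpow hrp.le hsp.le
  rw [key]
  have amgm : 2 * (r ε ^ p * s ε ^ p) ≤ r ε ^ p * r ε ^ p + s ε ^ p * s ε ^ p := by
    nlinarith [sq_nonneg (r ε ^ p - s ε ^ p)]
  have heq : (C₁ + C₂) / 2 / ε = (C₁ / ε + C₂ / ε) / 2 := by
    field_simp
  rw [heq]
  linarith [e1, e2, b1, b2]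

lemma ss_add {r s : ℝ → ℝ} (hr : SlowScale r) (hs : SlowScale s) :
    SlowScale (fun ε => r ε + s ε) := by
  refine ⟨fun ε hε => add_pos (hr.1 ε hε) (hs.1 ε hε), fun p hp => ?_⟩
  obtain ⟨C₁, hC₁, ε₁, hε₁, h₁⟩ := hr.2 p hp
  obtain ⟨C₂, hC₂, ε₂, hε₂, h₂⟩ := hs.2 p hp
  refine ⟨2 ^ p * (C₁ + C₂), by positivity, min ε₁ ε₂,
    ⟨lt_min hε₁.1 hε₂.1, lt_of_le_of_lt (min_le_left _ _) hε₁.2⟩, fun ε hε => ?_⟩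
  have hεIoc : ε ∈ Set.Ioc (0:ℝ) 1 := ⟨hε.1, le_of_lt (lt_of_lt_of_le hε.2
    ((min_le_left _ _).trans hε₁.2.le))⟩
  have hrp := hr.1 ε hεIoc
  have hsp := hs.1 ε hεIoc
  have b1 : r ε ^ p ≤ C₁ / ε := h₁ ε ⟨hε.1, lt_of_lt_of_le hε.2 (min_le_left _ _)⟩
  have b2 : s ε ^ p ≤ C₂ / ε := h₂ ε ⟨hε.1, lt_of_lt_of_le hε.2 (min_le_right _ _)⟩
  have h1 : r ε + s ε ≤ 2 * max (r ε) (s ε) := by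
    rcases le_total (r ε) (s ε) with h | h
    · rw [max_eq_right h]; linarith
    · rw [max_eq_left h]; linarith
  have h2 : (r ε + s ε) ^ p ≤ (2 * max (r ε) (s ε)) ^ p :=
    Real.rpow_le_rpow (by positivity) h1 hp.le
  have h3 : (2 * max (r ε) (s ε)) ^ p = 2 ^ p * (max (r ε) (s ε)) ^ p :=
    Real.mul_rpow (by norm_num) (le_max_of_le_left hrp.le)
  have h4 : (max (r ε) (s ε)) ^ p ≤ C₁ / ε + C₂ / ε := by
    rcases max_choice (r ε) (s ε) with h | h <;> rw [h]
    · have := Real.rpow_nonneg hsp.le p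
      linarith [b1, div_nonneg hC₂.le hε.1.le]
    · have := Real.rpow_nonneg hrp.le p
      linarith [b2, div_nonneg hC₁.le hε.1.le]
  calc (r ε + s ε) ^ p ≤ 2 ^ p * (max (r ε) (s ε)) ^ p := by rw [← h3]; exact h2
    _ ≤ 2 ^ p * (C₁ / ε + C₂ / ε) := by
        have : (0:ℝ) < 2 ^ p := Real.rpow_pos_of_pos (by norm_num) p
        nlinarith
    _ = 2 ^ p * (C₁ + C₂) / ε := by ring

lemma ss_of_le {r s : ℝ → ℝ} (hrpos : ∀ ε ∈ Set.Ioc (0:ℝ) 1, 0 < r ε)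
    (hle : ∀ ε ∈ Set.Ioc (0:ℝ) 1, r ε ≤ s ε) (hs : SlowScale s) : SlowScale r := by
  refine ⟨hrpos, fun p hp => ?_⟩
  obtain ⟨C, hC, ε₁, hε₁, h⟩ := hs.2 p hp
  refine ⟨C, hC, ε₁, hε₁, fun ε hε => ?_⟩
  have hεIoc : ε ∈ Set.Ioc (0:ℝ) 1 := ⟨hε.1, le_of_lt (lt_of_lt_of_le hε.2 hε₁.2.le)⟩
  exact le_trans (Real.rpow_le_rpow (hrpos ε hεIoc).le (hle ε hεIoc) hp.le) (h ε hε)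

lemma ss_max {r s : ℝ → ℝ} (hr : SlowScale r) (hs : SlowScale s) :
    SlowScale (fun ε => max (r ε) (s ε)) := by
  refine ss_of_le (fun ε hε => lt_max_of_lt_left (hr.1 ε hε))
    (fun ε hε => ?_) (ss_add hr hs)
  have := (hr.1 ε hε).le
  have := (hs.1 ε hε).le
  rcases max_choice (r ε) (s ε) with h | h <;> rw [h] <;> linarith


/-! list estimate helpers -/

variable {β : Type*}

lemma norm_list_sum (L : List β) (g : β → ℂ) :
    ‖(L.map g).sum‖ ≤ (L.map fun b => ‖g b‖).sum := by
  induction L with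
  | nil => simp
  | cons b t ih =>
      simp only [List.map_cons, List.sum_cons]
      exact le_trans (norm_add_le _ _) (by linarith)

lemma norm_list_prod (L : List β) (g : β → ℂ) :
    ‖(L.map g).prod‖ = (L.map fun b => ‖g b‖).prod := by
  induction L with
  | nil => simp
  | cons b t ih => simp [norm_mul, ih]

lemma list_prod_nonneg (L : List β) (g : β → ℝ) (hg : ∀ b ∈ L, 0 ≤ g b) :
    0 ≤ (L.map g).prod := by
  induction L with
  | nil => simp
  | cons b t ih =>
      simp only [List.map_cons, List.prod_cons]
      exact mul_nonneg (hg b (List.mem_cons_self))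
        (ih fun b hb => hg b (List.mem_cons_of_mem _ hb))

lemma list_prod_le_of_le (L : List β) (g h : β → ℝ) (hg : ∀ b ∈ L, 0 ≤ g b)
    (hle : ∀ b ∈ L, g b ≤ h b) : (L.map g).prod ≤ (L.map h).prod := by
  induction L with
  | nil => simp
  | cons b t ih =>
      simp only [List.map_cons, List.prod_cons]
      have h1 := hg b (List.mem_cons_self)
      have h2 := hle b (List.mem_cons_self)
      have h3 := list_prod_nonneg t g fun b hb => hg b (List.mem_cons_of_mem _ hb)
      have h4 := ih (fun b hb => hg b (List.mem_cons_of_mem _ hb))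
        (fun b hb => hle b (List.mem_cons_of_mem _ hb))
      nlinarith

lemma list_prod_mul_split (L : List β) (g h : β → ℝ) :
    (L.map fun b => g b * h b).prod = (L.map g).prod * (L.map h).prod := by
  induction L with
  | nil => simp
  | cons b t ih => simp [ih]; ring

lemma list_sum_mul_right (L : List β) (g : β → ℝ) (a : ℝ) :
    (L.map fun b => g b * a).sum = (L.map g).sum * a := by
  induction L with
  | nil => simp
  | cons b t ih => simp [ih]; ring

lemma list_sum_le (L : List β) (g h : β → ℝ) (hle : ∀ b ∈ L, g b ≤ h b) :
    (L.map g).sum ≤ (L.map h).sum := by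
  induction L with
  | nil => simp
  | cons b t ih =>
      simp only [List.map_cons, List.sum_cons]
      have := hle b (List.mem_cons_self)
      have := ih fun b hb => hle b (List.mem_cons_of_mem _ hb)
      linarith

lemma list_rpow_prod (L : List β) (g : β → ℕ) (A δ : ℝ) (hA : 0 < A) :
    (L.map fun b => A ^ (δ * (g b : ℝ))).prod = A ^ (δ * ((L.map g).sum : ℝ)) := by
  induction L with
  | nil => simp
  | cons b t ih =>
      simp only [List.map_cons, List.prod_cons, List.sum_cons, ih]
      rw [← Real.rpow_add hA]
      congr 1
      push_cast
      ring

lemma foldr_max_base (L : List β) (g : β → ℝ) (b : ℝ) :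
    b ≤ (L.map g).foldr max b := by
  induction L with
  | nil => simp
  | cons c t ih =>
      simp only [List.map_cons, List.foldr_cons]
      exact le_trans ih (le_max_right _ _)

lemma foldr_max_mem (L : List β) (g : β → ℝ) (b : ℝ) :
    ∀ c ∈ L, g c ≤ (L.map g).foldr max b := by
  induction L with
  | nil => simp
  | cons c t ih =>
      intro d hd
      simp only [List.map_cons, List.foldr_cons]
      rcases List.mem_cons.mp hd with rfl | hd
      · exact le_max_left _ _
      · exact le_trans (ih d hd) (le_max_right _ _)

lemma foldr_min_base (L : List β) (g : β → ℝ) (b : ℝ) :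
    (L.map g).foldr min b ≤ b := by
  induction L with
  | nil => simp
  | cons c t ih =>
      simp only [List.map_cons, List.foldr_cons]
      exact le_trans (min_le_right _ _) ih

lemma foldr_min_mem (L : List β) (g : β → ℝ) (b : ℝ) :
    ∀ c ∈ L, (L.map g).foldr min b ≤ g c := by
  induction L with
  | nil => simp
  | cons c t ih =>
      intro d hd
      simp only [List.map_cons, List.foldr_cons]
      rcases List.mem_cons.mp hd with rfl | hd
      · exact min_le_left _ _
      · exact le_trans (min_le_right _ _) (ih d hd)

lemma foldr_min_pos (L : List β) (g : β → ℝ) (b : ℝ) (hb : 0 < b)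
    (hg : ∀ c ∈ L, 0 < g c) : 0 < (L.map g).foldr min b := by
  induction L with
  | nil => simpa using hb
  | cons c t ih =>
      simp only [List.map_cons, List.foldr_cons]
      exact lt_min (hg c (List.mem_cons_self))
        (ih fun d hd => hg d (List.mem_cons_of_mem _ hd))

lemma ss_foldr_max {r₀ : ℝ → ℝ} (h₀ : SlowScale r₀) (L : List β) (g : β → ℝ → ℝ)
    (hg : ∀ c ∈ L, SlowScale (g c)) :
    SlowScale (fun ε => (L.map fun c => g c ε).foldr max (r₀ ε)) := by
  induction L with
  | nil => simpa using h₀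
  | cons c t ih =>
      simp only [List.map_cons, List.foldr_cons]
      exact ss_max (hg c (List.mem_cons_self))
        (ih fun d hd => hg d (List.mem_cons_of_mem _ hd))


/-- collect all multi-indices of a term list -/
def collect (L : List (ℂ × List (Fin n → ℕ))) : List (Fin n → ℕ) :=
  L.foldr (fun p acc => p.2 ++ acc) []

lemma mem_collect {L : List (ℂ × List (Fin n → ℕ))} {p : ℂ × List (Fin n → ℕ)}
    (hp : p ∈ L) {μ : Fin n → ℕ} (hμ : μ ∈ p.2) : μ ∈ collect L := by
  induction L with
  | nil => simp at hp
  | cons q t ih =>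
      rcases List.mem_cons.mp hp with rfl | hp
      · exact List.mem_append_left _ hμ
      · exact List.mem_append_right _ (ih hp)

end Stmt14Aux

/-- Step 2 of the proof of Theorem 3.2 — estimates on the
    x-derivatives of 1/P_ε. -/
theorem stmt14 {n m : ℕ} (U Γ : Set (Rn n)) (hU : IsOpen U)
    (hΓo : IsOpen Γ) (hΓc : IsCone Γ) (hΓ0 : (0 : Rn n) ∉ Γ)
    (a : (Fin n → ℕ) → ℝ → Rn n → ℂ)
    (hasm : ∀ σ ∈ midx n m, ∀ ε ∈ Set.Ioc (0:ℝ) 1, ContDiffOn ℝ (⊤ : ℕ∞) (a σ ε) U)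
    (δ ρ : ℝ) (hδ0 : 0 ≤ δ) (hδρ : δ < ρ) (hρ1 : ρ ≤ 1)
    (hmh2 : ∀ K : Set (Rn n), IsCompact K → K ⊆ U →
      MH2 m (fun ε => Psym m a ε) K Γ δ ρ)
    (hPne : ∀ K : Set (Rn n), IsCompact K → K ⊆ U →
      ∃ r₀ : ℝ → ℝ, SlowScale r₀ ∧ ∃ ε' > (0:ℝ), ∀ ε ∈ Set.Ioo (0:ℝ) ε',
        ∀ x ∈ K, ∀ ξ ∈ Γ, r₀ ε ≤ ‖ξ‖ → Psym m a ε x ξ ≠ 0) :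
    ∀ K : Set (Rn n), IsCompact K → K ⊆ U → ∀ lam : Fin n → ℕ,
      ∃ T : ℝ → ℝ, SlowScale T ∧ ∃ t : ℝ → ℝ, SlowScale t ∧ ∃ ν > (0:ℝ),
        ∀ ε ∈ Set.Ioo (0:ℝ) ν, ∀ x ∈ K, ∀ ξ ∈ Γ, t ε ≤ ‖ξ‖ →
          ‖pdx lam (fun x' ξ' => (Psym m a ε x' ξ')⁻¹) x ξ‖ ≤
            T ε * ‖Psym m a ε x ξ‖⁻¹ * (1 + ‖ξ‖) ^ (δ * (mdeg lam : ℝ)) := by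
  intro K hK hKU lam
  obtain ⟨K', hK'c, hKint, hK'U⟩ := exists_compact_between hK hU hKU
  choose s hss r hsr ε₁ hε₁pos hbound using hmh2 K' hK'c hK'U
  obtain ⟨r₀, hr₀, ε', hε'pos, hPne'⟩ := hPne K' hK'c hK'U
  obtain ⟨L, hLdeg, hLid⟩ := Stmt14Aux.pd_inv_identity (n := n) lam
  set A : List (Fin n → ℕ) := Stmt14Aux.collect L with hA
  set T : ℝ → ℝ := fun ε =>
    (L.map (fun p => (‖p.1‖ + 1) * ((p.2.map (fun μ => s μ ε)).prod))).sum + 1 with hT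
  set t : ℝ → ℝ := fun ε => (A.map (fun μ => r μ ε)).foldr max (r₀ ε) with ht
  set ν : ℝ := (A.map ε₁).foldr min (min ε' 1) with hν
  have hsprod : ∀ ms : List (Fin n → ℕ),
      SlowScale (fun ε => (ms.map (fun μ => s μ ε)).prod) := by
    intro ms
    induction ms with
    | nil => simpa using Stmt14Aux.ss_const one_pos
    | cons μ tl ih =>
        simp only [List.map_cons, List.prod_cons]
        exact Stmt14Aux.ss_mul (hss μ) ih
  have hTss : SlowScale T := by
    rw [hT]
    have key : ∀ L' : List (ℂ × List (Fin n → ℕ)), SlowScale (fun ε =>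
        (L'.map (fun p => (‖p.1‖ + 1) * ((p.2.map (fun μ => s μ ε)).prod))).sum + 1) := by
      intro L'
      induction L' with
      | nil => simpa using Stmt14Aux.ss_const one_pos
      | cons p tl ih =>
          have he : (fun ε =>
              (((p :: tl).map (fun p => (‖p.1‖ + 1) * ((p.2.map (fun μ => s μ ε)).prod))).sum
                + 1))
              = fun ε => ((‖p.1‖ + 1) * ((p.2.map (fun μ => s μ ε)).prod)) +
                ((tl.map (fun p => (‖p.1‖ + 1) * ((p.2.map (fun μ => s μ ε)).prod))).sum + 1) := by
            funext ε
            simp only [List.map_cons, List.sum_cons]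
            ring
          rw [he]
          exact Stmt14Aux.ss_add
            (Stmt14Aux.ss_mul (Stmt14Aux.ss_const (by positivity)) (hsprod p.2)) ih
    exact key L
  have htss : SlowScale t := by
    rw [ht]
    exact Stmt14Aux.ss_foldr_max hr₀ A (fun μ => r μ) (fun μ _ => hsr μ)
  have hνpos : 0 < ν := by
    rw [hν]
    exact Stmt14Aux.foldr_min_pos A ε₁ _ (lt_min hε'pos one_pos) (fun μ _ => hε₁pos μ)
  refine ⟨T, hTss, t, htss, ν, hνpos, ?_⟩
  intro ε hε x hx ξ hξ hξn
  have hν1 : ν ≤ 1 := le_trans (Stmt14Aux.foldr_min_base A ε₁ _) (min_le_right _ _)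
  have hνε' : ν ≤ ε' := le_trans (Stmt14Aux.foldr_min_base A ε₁ _) (min_le_left _ _)
  have hε01 : ε ∈ Set.Ioc (0:ℝ) 1 := ⟨hε.1, le_of_lt (lt_of_lt_of_le hε.2 hν1)⟩
  set V : Set (Rn n) := interior K' with hV
  have hVopen : IsOpen V := isOpen_interior
  have hxV : x ∈ V := hKint hx
  have hVK' : V ⊆ K' := interior_subset
  set f : Rn n → ℂ := fun y => Psym m a ε y ξ with hf
  have hfU : ContDiffOn ℝ (⊤ : ℕ∞) f U := by
    have h1 : ∀ σ ∈ midx n m, ContDiffOn ℝ (⊤ : ℕ∞) (fun y => a σ ε y * mpow ξ σ) U :=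
      fun σ hσ => ((hasm σ hσ ε hε01).of_le (by simp)).mul contDiffOn_const
    exact ContDiffOn.sum h1
  have hfV : ContDiffOn ℝ (⊤ : ℕ∞) f V := hfU.mono (hVK'.trans hK'U)
  have hf0 : ∀ y ∈ V, f y ≠ 0 := by
    intro y hy
    refine hPne' ε ⟨hε.1, lt_of_lt_of_le hε.2 hνε'⟩ y (hVK' hy) ξ hξ ?_
    exact le_trans (le_trans (Stmt14Aux.foldr_max_base A (fun μ => r μ ε) (r₀ ε)) le_rfl) hξn
  have hid := hLid V f hVopen hfV hf0 x hxV
  have hPnorm : 0 < ‖f x‖ := norm_pos_iff.mpr (hf0 x hxV)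
  have hξ1 : (0:ℝ) < 1 + ‖ξ‖ := by positivity
  -- bound for each atom
  have hatom : ∀ μ ∈ A, ‖pd μ f x * (f x)⁻¹‖ ≤ s μ ε * (1 + ‖ξ‖) ^ (δ * (mdeg μ : ℝ)) := by
    intro μ hμA
    have hε1μ : ε ∈ Set.Ioo (0:ℝ) (ε₁ μ) :=
      ⟨hε.1, lt_of_lt_of_le hε.2 (le_trans (Stmt14Aux.foldr_min_mem A ε₁ _ μ hμA)
        le_rfl)⟩
    have hrμ : r μ ε ≤ ‖ξ‖ :=
      le_trans (Stmt14Aux.foldr_max_mem A (fun μ => r μ ε) (r₀ ε) μ hμA) hξn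
    have hb := hbound μ (fun _ => 0) (by simp [mdeg]) ε hε1μ x (hVK' hxV) ξ hξ hrμ
    have hpdxi0 : pdxi (fun _ : Fin n => 0) (Psym m a ε) = Psym m a ε := by
      funext y η
      exact congrFun (Stmt14Aux.pd_zero (fun η' => Psym m a ε y η')) η
    rw [hpdxi0] at hb
    have hdeg0 : ((mdeg (fun _ : Fin n => 0) : ℕ) : ℝ) = 0 := by simp [mdeg]
    rw [hdeg0, mul_zero, sub_zero] at hb
    have hb' : ‖pd μ f x‖ ≤ s μ ε * ‖f x‖ * (1 + ‖ξ‖) ^ (δ * (mdeg μ : ℝ)) := hb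
    rw [norm_mul, norm_inv]
    calc ‖pd μ f x‖ * ‖f x‖⁻¹
        ≤ (s μ ε * ‖f x‖ * (1 + ‖ξ‖) ^ (δ * (mdeg μ : ℝ))) * ‖f x‖⁻¹ :=
          mul_le_mul_of_nonneg_right hb' (by positivity)
      _ = s μ ε * (1 + ‖ξ‖) ^ (δ * (mdeg μ : ℝ)) * (‖f x‖ * ‖f x‖⁻¹) := by ring
      _ = s μ ε * (1 + ‖ξ‖) ^ (δ * (mdeg μ : ℝ)) := by
          rw [mul_inv_cancel₀ hPnorm.ne', mul_one]
  -- bound for each term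
  have hterm : ∀ p ∈ L, ‖Stmt14Aux.tval f p x‖ ≤
      ((‖p.1‖ + 1) * ((p.2.map (fun μ => s μ ε)).prod)) *
        ((1 + ‖ξ‖) ^ (δ * (mdeg lam : ℝ)) * ‖f x‖⁻¹) := by
    intro p hp
    have hnorm : ‖Stmt14Aux.tval f p x‖ =
        ‖p.1‖ * ((p.2.map (fun μ => ‖pd μ f x * (f x)⁻¹‖)).prod) * ‖f x‖⁻¹ := by
      rw [Stmt14Aux.tval, norm_mul, norm_mul, norm_inv, Stmt14Aux.norm_list_prod]
    rw [hnorm]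
    have hprodle : ((p.2.map (fun μ => ‖pd μ f x * (f x)⁻¹‖)).prod) ≤
        ((p.2.map (fun μ => s μ ε * (1 + ‖ξ‖) ^ (δ * (mdeg μ : ℝ)))).prod) :=
      Stmt14Aux.list_prod_le_of_le p.2 _ _ (fun μ _ => norm_nonneg _)
        (fun μ hμ => hatom μ (Stmt14Aux.mem_collect hp hμ))
    have hsplit : ((p.2.map (fun μ => s μ ε * (1 + ‖ξ‖) ^ (δ * (mdeg μ : ℝ)))).prod) =
        ((p.2.map (fun μ => s μ ε)).prod) *
          ((p.2.map (fun μ => (1 + ‖ξ‖) ^ (δ * (mdeg μ : ℝ)))).prod) :=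
      Stmt14Aux.list_prod_mul_split p.2 _ _
    have hrpow : ((p.2.map (fun μ => (1 + ‖ξ‖) ^ (δ * (mdeg μ : ℝ)))).prod) =
        (1 + ‖ξ‖) ^ (δ * (mdeg lam : ℝ)) := by
      rw [Stmt14Aux.list_rpow_prod p.2 mdeg _ δ hξ1, hLdeg p hp]
    have h1 : (0:ℝ) ≤ (1 + ‖ξ‖) ^ (δ * (mdeg lam : ℝ)) := by positivity
    have h2 : (0:ℝ) ≤ ‖f x‖⁻¹ := by positivity
    have h3 : (0:ℝ) ≤ ‖p.1‖ := norm_nonneg _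
    have h4 : (0:ℝ) ≤ ((p.2.map (fun μ => ‖pd μ f x * (f x)⁻¹‖)).prod) :=
      Stmt14Aux.list_prod_nonneg _ _ (fun μ _ => norm_nonneg _)
    have h5 : (0:ℝ) ≤ ((p.2.map (fun μ => s μ ε)).prod) :=
      Stmt14Aux.list_prod_nonneg _ _ (fun μ _ => (hss μ |>.1 ε hε01).le)
    calc ‖p.1‖ * ((p.2.map (fun μ => ‖pd μ f x * (f x)⁻¹‖)).prod) * ‖f x‖⁻¹
        ≤ ‖p.1‖ * (((p.2.map (fun μ => s μ ε)).prod) *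
            ((1 + ‖ξ‖) ^ (δ * (mdeg lam : ℝ)))) * ‖f x‖⁻¹ := by
          have := hprodle
          rw [hsplit, hrpow] at this
          exact mul_le_mul_of_nonneg_right (mul_le_mul_of_nonneg_left this h3) h2
      _ = ‖p.1‖ * (((p.2.map (fun μ => s μ ε)).prod) *
            ((1 + ‖ξ‖) ^ (δ * (mdeg lam : ℝ)) * ‖f x‖⁻¹)) := by ring
      _ ≤ (‖p.1‖ + 1) * (((p.2.map (fun μ => s μ ε)).prod) *
            ((1 + ‖ξ‖) ^ (δ * (mdeg lam : ℝ)) * ‖f x‖⁻¹)) := by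
          exact mul_le_mul_of_nonneg_right (by linarith)
            (mul_nonneg h5 (mul_nonneg h1 h2))
      _ = ((‖p.1‖ + 1) * ((p.2.map (fun μ => s μ ε)).prod)) *
            ((1 + ‖ξ‖) ^ (δ * (mdeg lam : ℝ)) * ‖f x‖⁻¹) := by ring
  -- final assembly
  have hLHS : ‖pdx lam (fun x' ξ' => (Psym m a ε x' ξ')⁻¹) x ξ‖
      = ‖pd lam (fun y => (f y)⁻¹) x‖ := rfl
  rw [hLHS, hid]
  calc ‖(L.map (fun q => Stmt14Aux.tval f q x)).sum‖
      ≤ (L.map (fun q => ‖Stmt14Aux.tval f q x‖)).sum :=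
        Stmt14Aux.norm_list_sum L _
    _ ≤ (L.map (fun p => ((‖p.1‖ + 1) * ((p.2.map (fun μ => s μ ε)).prod)) *
          ((1 + ‖ξ‖) ^ (δ * (mdeg lam : ℝ)) * ‖f x‖⁻¹))).sum :=
        Stmt14Aux.list_sum_le L _ _ hterm
    _ = (L.map (fun p => (‖p.1‖ + 1) * ((p.2.map (fun μ => s μ ε)).prod))).sum *
          ((1 + ‖ξ‖) ^ (δ * (mdeg lam : ℝ)) * ‖f x‖⁻¹) :=
        Stmt14Aux.list_sum_mul_right L _ _
    _ ≤ T ε * ((1 + ‖ξ‖) ^ (δ * (mdeg lam : ℝ)) * ‖f x‖⁻¹) := by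
        have hsum : (L.map (fun p => (‖p.1‖ + 1) *
            ((p.2.map (fun μ => s μ ε)).prod))).sum ≤ T ε := by
          rw [hT]; simp
        have hpos : (0:ℝ) ≤ (1 + ‖ξ‖) ^ (δ * (mdeg lam : ℝ)) * ‖f x‖⁻¹ := by positivity
        exact mul_le_mul_of_nonneg_right hsum hpos
    _ = T ε * ‖Psym m a ε x ξ‖⁻¹ * (1 + ‖ξ‖) ^ (δ * (mdeg lam : ℝ)) := by
        rw [hf]; ring

end
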